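/- arXiv:1604.01656 — 6 statements merged into one kernel-verified Lean document; each statement's English description precedes it below -/
import Mathlib

section
/- The function α_ρ: Q × Q → Z(U) defined by α_ρ(q₁,q₂) := ρ(χ(q₁,q₂)) M_{q₂}⁻¹ M_{q₁}⁻¹ M_{q₁q₂} satisfies the 2-cocycle condition: for all q₁, q₂, q₃ ∈ Q, α_ρ(q₁, q₂q₃) α_ρ(q₂,q₃) = α_ρ(q₁q₂, q₃) α_ρ(q₁,q₂), i.e. α_ρ is a 2-cocycle of Q with coefficients in the abelian group Z(U) regarded as a trivial Q-module. -/
/-- `χ(q₁,q₂) := σ(q₁q₂)⁻¹ σ(q₁) σ(q₂)`, as an element of the normal subgroup `A`. -/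
def chi {G : Type*} [Group G] (A : Subgroup G) [A.Normal] (σ : G ⧸ A → G)
    (hσ : ∀ q, QuotientGroup.mk' A (σ q) = q) (q₁ q₂ : G ⧸ A) : A :=
  ⟨(σ (q₁ * q₂))⁻¹ * σ q₁ * σ q₂, by
    have h : QuotientGroup.mk' A ((σ (q₁ * q₂))⁻¹ * σ q₁ * σ q₂) = 1 := by
      rw [map_mul, map_mul, map_inv, hσ, hσ, hσ]; group
    simpa using (QuotientGroup.eq_one_iff _).mp h⟩

/-- `ψ(q)(a) := σ(q)⁻¹ a σ(q)`, as an element of the normal subgroup `A`. -/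
def psi {G : Type*} [Group G] (A : Subgroup G) [hA : A.Normal] (σ : G ⧸ A → G)
    (q : G ⧸ A) (a : A) : A :=
  ⟨(σ q)⁻¹ * a * σ q, by simpa using hA.conj_mem a.1 a.2 (σ q)⁻¹⟩

/-- `α_ρ(q₁,q₂) := ρ(χ(q₁,q₂)) M_{q₂}⁻¹ M_{q₁}⁻¹ M_{q₁q₂}`. -/
def alphaRho {G U : Type*} [Group G] [Group U] (A : Subgroup G) [A.Normal]
    (ρ : A →* U) (σ : G ⧸ A → G) (hσ : ∀ q, QuotientGroup.mk' A (σ q) = q)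
    (M : G ⧸ A → U) (q₁ q₂ : G ⧸ A) : U :=
  ρ (chi A σ hσ q₁ q₂) * (M q₂)⁻¹ * (M q₁)⁻¹ * M (q₁ * q₂)

/-- Let `G` be a finite group, `A` a normal subgroup with quotient `Q = G/A`, `U` a group
with center `Z(U)`, and `ρ : A → U` a homomorphism.  Let `σ : Q → G` be a set-theoretic
section with `σ(1) = 1` and `M : Q → U` a function with `M_1 = 1`, satisfying
`ρ(σ(q)⁻¹ a σ(q)) = M_q⁻¹ ρ(a) M_q` for all `q, a`, and such that
`α_ρ(q₁,q₂) := ρ(χ(q₁,q₂)) M_{q₂}⁻¹ M_{q₁}⁻¹ M_{q₁q₂}` lies in `Z(U)` for all `q₁, q₂`.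
Then `α_ρ` satisfies the 2-cocycle condition
`α_ρ(q₁,q₂q₃) α_ρ(q₂,q₃) = α_ρ(q₁q₂,q₃) α_ρ(q₁,q₂)`, i.e. `α_ρ` is a 2-cocycle of `Q`
with coefficients in the abelian group `Z(U)` regarded as a trivial `Q`-module. -/
theorem alphaRho_cocycle
    {G U : Type*} [Group G] [Finite G] [Group U] (A : Subgroup G) [A.Normal]
    (ρ : A →* U)
    (σ : G ⧸ A → G) (hσ : ∀ q, QuotientGroup.mk' A (σ q) = q) (hσ1 : σ 1 = 1)
    (M : G ⧸ A → U) (hM1 : M 1 = 1)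
    (hMconj : ∀ (q : G ⧸ A) (a : A), ρ (psi A σ q a) = (M q)⁻¹ * ρ a * M q)
    (hcen : ∀ q₁ q₂ : G ⧸ A, alphaRho A ρ σ hσ M q₁ q₂ ∈ Subgroup.center U) :
    ∀ q₁ q₂ q₃ : G ⧸ A,
      alphaRho A ρ σ hσ M q₁ (q₂ * q₃) * alphaRho A ρ σ hσ M q₂ q₃ =
        alphaRho A ρ σ hσ M (q₁ * q₂) q₃ * alphaRho A ρ σ hσ M q₁ q₂ := by
  intro q₁ q₂ q₃
  set α := alphaRho A ρ σ hσ M with hα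
  set c : G ⧸ A → G ⧸ A → U := fun q r => ρ (chi A σ hσ q r) with hc
  have hcomm : ∀ (q r : G ⧸ A) (x : U), x * α q r = α q r * x := fun q r x =>
    Subgroup.mem_center_iff.mp (hcen q r) x
  have hK : ∀ q r, M (q * r) = M q * M r * (c q r)⁻¹ * α q r := by
    intro q r
    simp only [hα, alphaRho, hc]
    group
  have hconj : ∀ (q : G ⧸ A) (a : A), (ρ a)⁻¹ * M q = M q * (ρ (psi A σ q a))⁻¹ := by
    intro q a
    rw [hMconj]
    group
  have hchi : chi A σ hσ q₁ (q₂ * q₃) * chi A σ hσ q₂ q₃ =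
      chi A σ hσ (q₁ * q₂) q₃ * psi A σ q₃ (chi A σ hσ q₁ q₂) := by
    ext
    simp only [chi, psi, Subgroup.coe_mul, MulMemClass.mk_mul_mk, mul_assoc]
    group
  have e1 : M (q₁ * (q₂ * q₃)) =
      M q₁ * M q₂ * M q₃ * (ρ (chi A σ hσ q₁ (q₂ * q₃) * chi A σ hσ q₂ q₃))⁻¹ *
        (α q₂ q₃ * α q₁ (q₂ * q₃)) := by
    rw [hK q₁ (q₂ * q₃), hK q₂ q₃, map_mul, mul_inv_rev]
    simp only [mul_assoc, hc]
    rw [← mul_assoc (α q₂ q₃), ← hcomm q₂ q₃ ((ρ (chi A σ hσ q₁ (q₂ * q₃)))⁻¹)]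
    simp only [mul_assoc]
  have e2 : M ((q₁ * q₂) * q₃) =
      M q₁ * M q₂ * M q₃ * (ρ (chi A σ hσ (q₁ * q₂) q₃ * psi A σ q₃ (chi A σ hσ q₁ q₂)))⁻¹ *
        (α (q₁ * q₂) q₃ * α q₁ q₂) := by
    rw [hK (q₁ * q₂) q₃, hK q₁ q₂, map_mul, mul_inv_rev]
    simp only [mul_assoc, hc]
    rw [← hcomm q₁ q₂ (M q₃ * ((ρ (chi A σ hσ (q₁ * q₂) q₃))⁻¹ * α (q₁ * q₂) q₃))]
    simp only [mul_assoc]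
    rw [← mul_assoc (ρ (chi A σ hσ q₁ q₂))⁻¹ (M q₃), hconj q₃ (chi A σ hσ q₁ q₂)]
    simp only [mul_assoc]
  have e3 : M q₁ * M q₂ * M q₃ * (ρ (chi A σ hσ q₁ (q₂ * q₃) * chi A σ hσ q₂ q₃))⁻¹ *
        (α q₂ q₃ * α q₁ (q₂ * q₃)) =
      M q₁ * M q₂ * M q₃ * (ρ (chi A σ hσ q₁ (q₂ * q₃) * chi A σ hσ q₂ q₃))⁻¹ *
        (α (q₁ * q₂) q₃ * α q₁ q₂) := by
    rw [← e1, mul_assoc q₁ q₂ q₃] at *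
    rw [e2, hchi]
  have e4 := mul_left_cancel e3
  rw [hcomm q₂ q₃ (α q₁ (q₂ * q₃))]
  exact e4
end

section
/- The cohomology class of α_ρ does not depend on the choices made: if σ, σ' are two set-theoretic sections of π with σ(1) = σ'(1) = 1, with associated maps χ, χ', and M, M': Q → U are corresponding choices of lifts (M_1 = M'_1 = 1, ρ(σ(q)⁻¹aσ(q)) = M_q⁻¹ρ(a)M_q, ρ(σ'(q)⁻¹aσ'(q)) = M'_q⁻¹ρ(a)M'_q, with p(M_q) = f(σ(q)) and p(M'_q) = f(σ'(q)) for a fixed homomorphism f: G → Inn(U) with f ∘ ι = p ∘ ρ), then the resulting 2-cocycles α_ρ and α'_ρ with values in Z(U) differ by a coboundary: there exists a function ε: Q → Z(U) such that α'_ρ(q₁,q₂) = α_ρ(q₁,q₂) ε(q₁) ε(q₂) ε(q₁q₂)⁻¹ for all q₁, q₂ ∈ Q. -/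
/-- difference of two sections, as an element of `A` -/
def nmap {G : Type*} [Group G] (A : Subgroup G) [A.Normal] (σ σ' : G ⧸ A → G)
    (hσ : ∀ q, QuotientGroup.mk' A (σ q) = q) (hσ' : ∀ q, QuotientGroup.mk' A (σ' q) = q)
    (q : G ⧸ A) : A :=
  ⟨(σ q)⁻¹ * σ' q, by
    have h : QuotientGroup.mk' A ((σ q)⁻¹ * σ' q) = 1 := by
      rw [map_mul, map_inv, hσ, hσ']; group
    simpa using (QuotientGroup.eq_one_iff _).mp h⟩

/-- difference of the two lifts -/
def Dmap {G U : Type*} [Group G] [Group U] (A : Subgroup G) [A.Normal]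
    (ρ : A →* U) (σ σ' : G ⧸ A → G)
    (hσ : ∀ q, QuotientGroup.mk' A (σ q) = q) (hσ' : ∀ q, QuotientGroup.mk' A (σ' q) = q)
    (M M' : G ⧸ A → U) (q : G ⧸ A) : U :=
  (ρ (nmap A σ σ' hσ hσ' q))⁻¹ * (M q)⁻¹ * M' q

theorem chi_expand {G : Type*} [Group G] (A : Subgroup G) [A.Normal] (σ σ' : G ⧸ A → G)
    (hσ : ∀ q, QuotientGroup.mk' A (σ q) = q) (hσ' : ∀ q, QuotientGroup.mk' A (σ' q) = q)
    (q₁ q₂ : G ⧸ A) :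
    chi A σ' hσ' q₁ q₂ =
      (nmap A σ σ' hσ hσ' (q₁ * q₂))⁻¹ * chi A σ hσ q₁ q₂ *
        psi A σ q₂ (nmap A σ σ' hσ hσ' q₁) * nmap A σ σ' hσ hσ' q₂ := by
  apply Subtype.ext
  simp only [chi, psi, nmap, Subgroup.coe_mul, InvMemClass.coe_inv]
  group

theorem center_iff {U : Type*} [Group U] (u : U) :
    u ∈ Subgroup.center U ↔ (MulAut.conj : U →* MulAut U).rangeRestrict u = 1 := by
  rw [Subtype.ext_iff]
  change _ ↔ MulAut.conj u = 1
  constructor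
  · intro h
    ext x
    have := Subgroup.mem_center_iff.mp h x
    simp only [MulAut.conj_apply, MulAut.one_apply]
    rw [mul_inv_eq_iff_eq_mul]
    exact this.symm
  · intro h
    rw [Subgroup.mem_center_iff]
    intro g
    have := MulEquiv.ext_iff.mp h g
    simp only [MulAut.conj_apply, MulAut.one_apply] at this
    exact (mul_inv_eq_iff_eq_mul.mp this).symm

theorem aux_word {U : Type*} [Group U] (m1 m2 m12 n1 n2 n12 x d1 d2 d12 : U)
    (h1 : ∀ y : U, d1 * y = y * d1) (h2 : ∀ y : U, d2 * y = y * d2)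
    (ha : ∀ y : U, (x * m2⁻¹ * m1⁻¹ * m12) * y = y * (x * m2⁻¹ * m1⁻¹ * m12)) :
    n12⁻¹ * x * (m2⁻¹ * n1 * m2) * n2 * (m2 * n2 * d2)⁻¹ * (m1 * n1 * d1)⁻¹ *
      (m12 * n12 * d12) =
    (x * m2⁻¹ * m1⁻¹ * m12) * d1⁻¹ * d2⁻¹ * d12 := by
  have c1 : ∀ y : U, Commute d1 y := h1
  have c2 : ∀ y : U, Commute d2 y := h2
  have e1 : ∀ y : U, d1⁻¹ * y = y * d1⁻¹ := fun y => ((c1 y).inv_left).eq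
  have e2 : ∀ y : U, d2⁻¹ * y = y * d2⁻¹ := fun y => ((c2 y).inv_left).eq
  have step1 :
      n12⁻¹ * x * (m2⁻¹ * n1 * m2) * n2 * (m2 * n2 * d2)⁻¹ * (m1 * n1 * d1)⁻¹ *
        (m12 * n12 * d12) =
      n12⁻¹ * (x * (m2⁻¹ * (n1 * (m2 * (n2 * (d2⁻¹ * (n2⁻¹ * (m2⁻¹ * (d1⁻¹ *
        (n1⁻¹ * (m1⁻¹ * (m12 * (n12 * d12))))))))))))) := by
    simp only [mul_inv_rev, mul_assoc]
  rw [step1, e2, e1]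
  simp only [mul_assoc, mul_inv_cancel_left]
  have key : n12⁻¹ * (x * (m2⁻¹ * (m1⁻¹ * (m12 * n12)))) = x * (m2⁻¹ * (m1⁻¹ * m12)) := by
    calc n12⁻¹ * (x * (m2⁻¹ * (m1⁻¹ * (m12 * n12))))
        = n12⁻¹ * (x * m2⁻¹ * m1⁻¹ * m12 * n12) := by group
      _ = n12⁻¹ * (n12 * (x * m2⁻¹ * m1⁻¹ * m12)) := by rw [ha n12]
      _ = x * (m2⁻¹ * (m1⁻¹ * m12)) := by group
  have swap : d1⁻¹ * (d2⁻¹ * d12) = d12 * (d1⁻¹ * d2⁻¹) := by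
    rw [e1, mul_assoc, e2, mul_assoc]
  calc n12⁻¹ * (x * (m2⁻¹ * (m1⁻¹ * (m12 * (n12 * (d12 * (d1⁻¹ * d2⁻¹)))))))
      = (n12⁻¹ * (x * (m2⁻¹ * (m1⁻¹ * (m12 * n12))))) * (d12 * (d1⁻¹ * d2⁻¹)) := by group
    _ = (x * (m2⁻¹ * (m1⁻¹ * m12))) * (d12 * (d1⁻¹ * d2⁻¹)) := by rw [key]
    _ = x * (m2⁻¹ * (m1⁻¹ * (m12 * (d1⁻¹ * (d2⁻¹ * d12))))) := by rw [← swap]; group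

/-- The cohomology class of `α_ρ` does not depend on the choices made: if `σ, σ'` are two
set-theoretic sections of `π : G → Q = G/A` with `σ(1) = σ'(1) = 1` and `M, M' : Q → U` are
corresponding choices of lifts (`M_1 = M'_1 = 1`, the conjugation relations
`ρ(σ(q)⁻¹ a σ(q)) = M_q⁻¹ ρ(a) M_q` and `ρ(σ'(q)⁻¹ a σ'(q)) = M'_q⁻¹ ρ(a) M'_q` hold, and
`p(M_q) = f(σ(q))`, `p(M'_q) = f(σ'(q))` for a fixed homomorphism `f : G → Inn(U)` with
`f ∘ ι = p ∘ ρ`), then the resulting 2-cocycles `α_ρ` and `α'_ρ` with values in the center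
`Z(U)` differ by a coboundary: there is `ε : Q → Z(U)` with
`α'_ρ(q₁,q₂) = α_ρ(q₁,q₂) ε(q₁) ε(q₂) ε(q₁q₂)⁻¹`. -/
theorem alphaRho_class_independent_of_choices
    {G U : Type*} [Group G] [Finite G] [Group U] (A : Subgroup G) [A.Normal]
    (ρ : A →* U)
    (f : G →* (MulAut.conj : U →* MulAut U).range)
    (hfι : ∀ a : A, f (a : G) = (MulAut.conj : U →* MulAut U).rangeRestrict (ρ a))
    (σ σ' : G ⧸ A → G)
    (hσ : ∀ q, QuotientGroup.mk' A (σ q) = q) (hσ' : ∀ q, QuotientGroup.mk' A (σ' q) = q)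
    (hσ1 : σ 1 = 1) (hσ'1 : σ' 1 = 1)
    (M M' : G ⧸ A → U) (hM1 : M 1 = 1) (hM'1 : M' 1 = 1)
    (hMconj : ∀ (q : G ⧸ A) (a : A), ρ (psi A σ q a) = (M q)⁻¹ * ρ a * M q)
    (hM'conj : ∀ (q : G ⧸ A) (a : A), ρ (psi A σ' q a) = (M' q)⁻¹ * ρ a * M' q)
    (hpM : ∀ q, (MulAut.conj : U →* MulAut U).rangeRestrict (M q) = f (σ q))
    (hpM' : ∀ q, (MulAut.conj : U →* MulAut U).rangeRestrict (M' q) = f (σ' q)) :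
    ∃ ε : G ⧸ A → U, (∀ q, ε q ∈ Subgroup.center U) ∧
      ∀ q₁ q₂ : G ⧸ A,
        alphaRho A ρ σ' hσ' M' q₁ q₂ =
          alphaRho A ρ σ hσ M q₁ q₂ * ε q₁ * ε q₂ * (ε (q₁ * q₂))⁻¹ := by
  -- centrality of D
  have hDc : ∀ q, Dmap A ρ σ σ' hσ hσ' M M' q ∈ Subgroup.center U := by
    intro q
    rw [center_iff]
    have h1 : (MulAut.conj : U →* MulAut U).rangeRestrict (Dmap A ρ σ σ' hσ hσ' M M' q) =
        (f (↑(nmap A σ σ' hσ hσ' q)))⁻¹ * (f (σ q))⁻¹ * f (σ' q) := by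
      simp only [Dmap, map_mul, map_inv, hpM, hpM', ← hfι]
    rw [h1, ← map_inv, ← map_inv, ← map_mul, ← map_mul]
    have h2 : ((nmap A σ σ' hσ hσ' q : G))⁻¹ * (σ q)⁻¹ * σ' q = 1 := by
      show (((σ q)⁻¹ * σ' q : G))⁻¹ * (σ q)⁻¹ * σ' q = 1
      group
    rw [h2, map_one]
  -- centrality of alphaRho
  have hαc : ∀ q₁ q₂, alphaRho A ρ σ hσ M q₁ q₂ ∈ Subgroup.center U := by
    intro q₁ q₂
    rw [center_iff]
    have h1 : (MulAut.conj : U →* MulAut U).rangeRestrict (alphaRho A ρ σ hσ M q₁ q₂) =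
        f (↑(chi A σ hσ q₁ q₂)) * (f (σ q₂))⁻¹ * (f (σ q₁))⁻¹ * f (σ (q₁ * q₂)) := by
      simp only [alphaRho, map_mul, map_inv, hpM, ← hfι]
    rw [h1, ← map_inv, ← map_inv, ← map_mul, ← map_mul, ← map_mul]
    have h2 : (chi A σ hσ q₁ q₂ : G) * (σ q₂)⁻¹ * (σ q₁)⁻¹ * σ (q₁ * q₂) = 1 := by
      show ((σ (q₁ * q₂))⁻¹ * σ q₁ * σ q₂ : G) * (σ q₂)⁻¹ * (σ q₁)⁻¹ * σ (q₁ * q₂) = 1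
      group
    rw [h2, map_one]
  refine ⟨fun q => (Dmap A ρ σ σ' hσ hσ' M M' q)⁻¹, fun q => Subgroup.inv_mem _ (hDc q), ?_⟩
  intro q₁ q₂
  rw [inv_inv]
  show alphaRho A ρ σ' hσ' M' q₁ q₂ =
      alphaRho A ρ σ hσ M q₁ q₂ * (Dmap A ρ σ σ' hσ hσ' M M' q₁)⁻¹ *
        (Dmap A ρ σ σ' hσ hσ' M M' q₂)⁻¹ * Dmap A ρ σ σ' hσ hσ' M M' (q₁ * q₂)
  have hM'eq : ∀ q, M' q = M q * ρ (nmap A σ σ' hσ hσ' q) * Dmap A ρ σ σ' hσ hσ' M M' q := by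
    intro q
    simp only [Dmap]
    group
  have lhs_eq : alphaRho A ρ σ' hσ' M' q₁ q₂ =
      (ρ (nmap A σ σ' hσ hσ' (q₁ * q₂)))⁻¹ * ρ (chi A σ hσ q₁ q₂) *
        ((M q₂)⁻¹ * ρ (nmap A σ σ' hσ hσ' q₁) * M q₂) * ρ (nmap A σ σ' hσ hσ' q₂) *
        (M q₂ * ρ (nmap A σ σ' hσ hσ' q₂) * Dmap A ρ σ σ' hσ hσ' M M' q₂)⁻¹ *
        (M q₁ * ρ (nmap A σ σ' hσ hσ' q₁) * Dmap A ρ σ σ' hσ hσ' M M' q₁)⁻¹ *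
        (M (q₁ * q₂) * ρ (nmap A σ σ' hσ hσ' (q₁ * q₂)) *
          Dmap A ρ σ σ' hσ hσ' M M' (q₁ * q₂)) := by
    rw [alphaRho, chi_expand A σ σ' hσ hσ', map_mul, map_mul, map_mul, map_inv,
      hMconj q₂ (nmap A σ σ' hσ hσ' q₁), ← hM'eq, ← hM'eq, ← hM'eq]
  rw [lhs_eq]
  exact aux_word (M q₁) (M q₂) (M (q₁ * q₂)) (ρ (nmap A σ σ' hσ hσ' q₁))
    (ρ (nmap A σ σ' hσ hσ' q₂)) (ρ (nmap A σ σ' hσ hσ' (q₁ * q₂)))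
    (ρ (chi A σ hσ q₁ q₂)) (Dmap A ρ σ σ' hσ hσ' M M' q₁)
    (Dmap A ρ σ σ' hσ hσ' M M' q₂) (Dmap A ρ σ σ' hσ hσ' M M' (q₁ * q₂))
    (fun y => (Subgroup.mem_center_iff.mp (hDc q₁) y).symm)
    (fun y => (Subgroup.mem_center_iff.mp (hDc q₂) y).symm)
    (fun y => (Subgroup.mem_center_iff.mp (hαc q₁ q₂) y).symm)
end

section
/- Suppose the 2-cocycle α_ρ is a coboundary, i.e. there exists a function ε: Q → Z(U) such that ε(q₂) ε(q₁q₂)⁻¹ ε(q₁) = α_ρ(q₁,q₂) for all q₁, q₂ ∈ Q. Then there exists a group homomorphism ρ̃: G → U with ρ̃(a) = ρ(a) for all a ∈ A; explicitly, ρ̃(g) = M_{π(g)} ε(π(g)) ρ(σ(π(g))⁻¹ g). -/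
/-- `σ(π(g))⁻¹ g`, as an element of the normal subgroup `A`. -/
def secRem {G : Type*} [Group G] (A : Subgroup G) [A.Normal] (σ : G ⧸ A → G)
    (hσ : ∀ q, QuotientGroup.mk' A (σ q) = q) (g : G) : A :=
  ⟨(σ (QuotientGroup.mk' A g))⁻¹ * g, by
    have h : QuotientGroup.mk' A ((σ (QuotientGroup.mk' A g))⁻¹ * g) = 1 := by
      rw [map_mul, map_inv, hσ]; group
    simpa using (QuotientGroup.eq_one_iff _).mp h⟩

lemma central_calc {U : Type*} [Group U] (m1 m2 m12 e1 e2 e12 r1 r2 : U)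
    (h1 : ∀ x, e1 * x = x * e1) (h2 : ∀ x, e2 * x = x * e2) (h12 : ∀ x, e12 * x = x * e12) :
    m12 * e12 * ((e2 * e12⁻¹ * e1 * m12⁻¹ * m1 * m2) * (m2⁻¹ * r1 * m2) * r2)
      = (m1 * e1 * r1) * (m2 * e2 * r2) := by
  have h12' : ∀ x, e12⁻¹ * x = x * e12⁻¹ := fun x =>
    (Commute.inv_left (h12 x : Commute e12 x)).eq
  simp only [mul_assoc, mul_inv_cancel_left, inv_mul_cancel_left]
  simp only [h1, h12, h12']
  simp only [mul_assoc, mul_inv_cancel_left, inv_mul_cancel_left, mul_inv_cancel,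
    inv_mul_cancel, mul_one]
  simp only [h2]
  simp only [mul_assoc, mul_inv_cancel_left, inv_mul_cancel_left]

/-- Suppose the 2-cocycle `α_ρ` is a coboundary: there is `ε : Q → Z(U)` with
`ε(q₂) ε(q₁q₂)⁻¹ ε(q₁) = α_ρ(q₁,q₂)` for all `q₁, q₂ ∈ Q = G/A`.  Then there exists a group
homomorphism `ρ̃ : G → U` with `ρ̃(a) = ρ(a)` for all `a ∈ A`; explicitly,
`ρ̃(g) = M_{π(g)} ε(π(g)) ρ(σ(π(g))⁻¹ g)`. -/
theorem extension_of_coboundary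
    {G U : Type*} [Group G] [Finite G] [Group U] (A : Subgroup G) [A.Normal]
    (ρ : A →* U)
    (σ : G ⧸ A → G) (hσ : ∀ q, QuotientGroup.mk' A (σ q) = q) (hσ1 : σ 1 = 1)
    (M : G ⧸ A → U) (hM1 : M 1 = 1)
    (hMconj : ∀ (q : G ⧸ A) (a : A), ρ (psi A σ q a) = (M q)⁻¹ * ρ a * M q)
    (hcen : ∀ q₁ q₂ : G ⧸ A, alphaRho A ρ σ hσ M q₁ q₂ ∈ Subgroup.center U)
    (ε : G ⧸ A → U) (hεcen : ∀ q, ε q ∈ Subgroup.center U)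
    (hcob : ∀ q₁ q₂ : G ⧸ A, ε q₂ * (ε (q₁ * q₂))⁻¹ * ε q₁ = alphaRho A ρ σ hσ M q₁ q₂) :
    ∃ ρt : G →* U, (∀ a : A, ρt a = ρ a) ∧
      ∀ g : G, ρt g =
        M (QuotientGroup.mk' A g) * ε (QuotientGroup.mk' A g) * ρ (secRem A σ hσ g) := by
  classical
  set π := QuotientGroup.mk' A with hπ
  -- ε 1 = 1
  have hα11 : alphaRho A ρ σ hσ M 1 1 = 1 := by
    have hch : chi A σ hσ 1 1 = 1 := by
      apply Subtype.ext
      simp [chi, hσ1]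
    simp [alphaRho, hch, hM1]
  have hε1 : ε 1 = 1 := by
    have := hcob 1 1
    rw [hα11, one_mul, mul_inv_cancel] at this
    simpa using this
  -- decomposition of secRem of a product
  have hdec : ∀ g₁ g₂ : G, secRem A σ hσ (g₁ * g₂) =
      chi A σ hσ (π g₁) (π g₂) * psi A σ (π g₂) (secRem A σ hσ g₁) * secRem A σ hσ g₂ := by
    intro g₁ g₂
    apply Subtype.ext
    simp only [secRem, chi, psi, Subgroup.coe_mul, map_mul]
    rw [← hπ]
    group
  set f : G → U := fun g => M (π g) * ε (π g) * ρ (secRem A σ hσ g) with hf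
  have hmul : ∀ g₁ g₂ : G, f (g₁ * g₂) = f g₁ * f g₂ := by
    intro g₁ g₂
    have hq : π (g₁ * g₂) = π g₁ * π g₂ := map_mul _ _ _
    set q₁ := π g₁; set q₂ := π g₂
    have hχ : (ρ (chi A σ hσ q₁ q₂) : U)
        = (ε q₂ * (ε (q₁ * q₂))⁻¹ * ε q₁) * (M (q₁ * q₂))⁻¹ * M q₁ * M q₂ := by
      have h := (hcob q₁ q₂).symm
      rw [alphaRho] at h
      rw [eq_comm, ← eq_mul_inv_iff_mul_eq] at h
      rw [h]
      group
    have hc := fun q => Subgroup.mem_center_iff.mp (hεcen q)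
    calc f (g₁ * g₂) = M (q₁ * q₂) * ε (q₁ * q₂) *
          (ρ (chi A σ hσ q₁ q₂) * ((M q₂)⁻¹ * ρ (secRem A σ hσ g₁) * M q₂)
            * ρ (secRem A σ hσ g₂)) := by
          rw [hf]; dsimp only
          rw [hdec g₁ g₂]
          simp only [map_mul]
          rw [hMconj]
      _ = (M q₁ * ε q₁ * ρ (secRem A σ hσ g₁)) * (M q₂ * ε q₂ * ρ (secRem A σ hσ g₂)) := by
          rw [hχ]
          have hcc := central_calc (M q₁) (M q₂) (M (q₁ * q₂)) (ε q₁) (ε q₂) (ε (q₁ * q₂))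
            (ρ (secRem A σ hσ g₁)) (ρ (secRem A σ hσ g₂))
            (fun x => (hc q₁ x).symm) (fun x => (hc q₂ x).symm)
            (fun x => (hc (q₁ * q₂) x).symm)
          simpa only [mul_assoc] using hcc
      _ = f g₁ * f g₂ := rfl
  refine ⟨MonoidHom.mk' f hmul, ?_, fun g => rfl⟩
  intro a
  have hπa : π (a : G) = 1 := (QuotientGroup.eq_one_iff _).mpr a.2
  have hsr : secRem A σ hσ (a : G) = a := by
    apply Subtype.ext
    simp [secRem, (QuotientGroup.eq_one_iff (a : G)).mpr a.2, hσ1]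
  show f (a : G) = ρ a
  rw [hf]; dsimp only
  rw [hπa, hM1, hε1, hsr, one_mul, one_mul]
end

section
/- Let ρ: A → U(V) be an irreducible unitary representation of A on a nonzero finite-dimensional complex inner product space V, where A is a normal subgroup of a finite group G, and suppose that for every g ∈ G there exists M_g ∈ U(V) with ρ(g⁻¹ a g) = M_g⁻¹ ρ(a) M_g for all a ∈ A. Then there exists a unique group homomorphism f: G → Inn(U(V)) such that for every g ∈ G, f(g) = p(M) for some (equivalently, for every) M ∈ U(V) satisfying ρ(g⁻¹ a g) = M⁻¹ ρ(a) M for all a ∈ A; moreover this f satisfies f(ι(a)) = p(ρ(a)) for all a ∈ A. -/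
/-- Conjugation of an element of a normal subgroup `A` by `g : G`:
`conjElem A g a = g⁻¹ * a * g`, viewed as an element of `A`. -/
def conjElem {G : Type*} [Group G] (A : Subgroup G) [hA : A.Normal] (g : G) (a : A) : A :=
  ⟨g⁻¹ * a * g, by simpa using hA.conj_mem a.1 a.2 g⁻¹⟩

/-- A unitary representation `ρ : H → U(V)` is irreducible if the only subspaces of `V`
invariant under all `ρ(h)` are `0` and `V`. -/
def IsIrreducibleUnitaryRep {H : Type*} [Group H] {V : Type*} [NormedAddCommGroup V]
    [InnerProductSpace ℂ V] [FiniteDimensional ℂ V]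
    (ρ : H →* unitary (V →L[ℂ] V)) : Prop :=
  ∀ W : Submodule ℂ V, (∀ h : H, ∀ v ∈ W, ((ρ h : V →L[ℂ] V) v) ∈ W) → W = ⊥ ∨ W = ⊤

-- Schur: a unitary commuting with all ρ(a) has trivial conjugation action
lemma schur_conj_eq_one {H : Type*} [Group H] {V : Type*} [NormedAddCommGroup V]
    [InnerProductSpace ℂ V] [FiniteDimensional ℂ V] [Nontrivial V]
    (ρ : H →* unitary (V →L[ℂ] V)) (hirr : IsIrreducibleUnitaryRep ρ)
    (T : unitary (V →L[ℂ] V)) (hT : ∀ a : H, ρ a * T = T * ρ a) :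
    MulAut.conj T = 1 := by
  set Tc : V →L[ℂ] V := (T : V →L[ℂ] V)
  have hcomm : ∀ a : H, ∀ v : V, Tc ((ρ a : V →L[ℂ] V) v) = (ρ a : V →L[ℂ] V) (Tc v) := by
    intro a v
    have h := congrArg Subtype.val (hT a)
    have h2 : (ρ a : V →L[ℂ] V) * Tc = Tc * (ρ a : V →L[ℂ] V) := h
    exact (congrFun (congrArg DFunLike.coe h2.symm) v)
  obtain ⟨c, hc⟩ := Module.End.exists_eigenvalue (Tc : V →ₗ[ℂ] V)
  set W := Module.End.eigenspace (Tc : V →ₗ[ℂ] V) c with hW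
  have hinv : ∀ h : H, ∀ v ∈ W, ((ρ h : V →L[ℂ] V) v) ∈ W := by
    intro h v hv
    rw [hW, Module.End.mem_eigenspace_iff] at *
    show Tc ((ρ h : V →L[ℂ] V) v) = c • _
    rw [hcomm h v, show Tc v = c • v from hv, map_smul]
  have hWtop : W = ⊤ := by
    rcases hirr W hinv with h | h
    · exact absurd h hc
    · exact h
  have hscal : ∀ v : V, Tc v = c • v := by
    intro v
    have : v ∈ W := hWtop ▸ Submodule.mem_top
    exact Module.End.mem_eigenspace_iff.mp this
  have hcen : ∀ u : unitary (V →L[ℂ] V), T * u = u * T := by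
    intro u
    apply Subtype.ext
    show Tc * (u : V →L[ℂ] V) = (u : V →L[ℂ] V) * Tc
    ext v
    simp only [ContinuousLinearMap.mul_apply]
    rw [hscal, hscal, map_smul]
  ext u
  simp only [MulAut.conj_apply, MulAut.one_apply]
  rw [hcen u, mul_inv_cancel_right]


set_option maxHeartbeats 1000000 in
/-- Let `ρ : A → U(V)` be an irreducible unitary representation of `A` on a nonzero
finite-dimensional complex inner product space `V`, where `A` is a normal subgroup of a
finite group `G`, and suppose that for every `g ∈ G` there exists `M_g ∈ U(V)` with
`ρ(g⁻¹ a g) = M_g⁻¹ ρ(a) M_g` for all `a ∈ A`.  Then there exists a unique group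
homomorphism `f : G → Inn(U(V))` (where `Inn(U(V))` is the range of the conjugation map
`p = MulAut.conj : U(V) → MulAut(U(V))`) such that for every `g ∈ G`, `f(g) = p(M)` for
every `M ∈ U(V)` satisfying `ρ(g⁻¹ a g) = M⁻¹ ρ(a) M` for all `a ∈ A` (such `M` exist by
hypothesis); moreover, this `f` satisfies `f(ι(a)) = p(ρ(a))` for all `a ∈ A`. -/
theorem exists_unique_f_to_inner_automorphisms
    {G : Type*} [Group G] [Finite G] (A : Subgroup G) [A.Normal]
    {V : Type*} [NormedAddCommGroup V] [InnerProductSpace ℂ V]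
    [FiniteDimensional ℂ V] [Nontrivial V]
    (ρ : A →* unitary (V →L[ℂ] V)) (hirr : IsIrreducibleUnitaryRep ρ)
    (hconj : ∀ g : G, ∃ M : unitary (V →L[ℂ] V),
      ∀ a : A, ρ (conjElem A g a) = M⁻¹ * ρ a * M) :
    (∃! f : G →* (MulAut.conj : unitary (V →L[ℂ] V) →*
          MulAut (unitary (V →L[ℂ] V))).range,
        ∀ (g : G) (M : unitary (V →L[ℂ] V)),
          (∀ a : A, ρ (conjElem A g a) = M⁻¹ * ρ a * M) →
          f g = (MulAut.conj : unitary (V →L[ℂ] V) →*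
            MulAut (unitary (V →L[ℂ] V))).rangeRestrict M) ∧
    (∀ f : G →* (MulAut.conj : unitary (V →L[ℂ] V) →*
          MulAut (unitary (V →L[ℂ] V))).range,
        (∀ (g : G) (M : unitary (V →L[ℂ] V)),
          (∀ a : A, ρ (conjElem A g a) = M⁻¹ * ρ a * M) →
          f g = (MulAut.conj : unitary (V →L[ℂ] V) →*
            MulAut (unitary (V →L[ℂ] V))).rangeRestrict M) →
        ∀ a : A, f (a : G) = (MulAut.conj : unitary (V →L[ℂ] V) →*
          MulAut (unitary (V →L[ℂ] V))).rangeRestrict (ρ a)) := by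
    classical
  set p := (MulAut.conj : unitary (V →L[ℂ] V) →* MulAut (unitary (V →L[ℂ] V))) with hp
  -- well-definedness
  have wd : ∀ (g : G) (M N : unitary (V →L[ℂ] V)),
      (∀ a : A, ρ (conjElem A g a) = M⁻¹ * ρ a * M) →
      (∀ a : A, ρ (conjElem A g a) = N⁻¹ * ρ a * N) →
      p.rangeRestrict M = p.rangeRestrict N := by
    intro g M N hM hN
    have hT : ∀ a : A, ρ a * (M * N⁻¹) = (M * N⁻¹) * ρ a := by
      intro a
      have h : M⁻¹ * ρ a * M = N⁻¹ * ρ a * N := (hM a).symm.trans (hN a)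
      calc ρ a * (M * N⁻¹) = M * (M⁻¹ * ρ a * M) * N⁻¹ := by group
        _ = M * (N⁻¹ * ρ a * N) * N⁻¹ := by rw [h]
        _ = (M * N⁻¹) * ρ a := by group
    have h1 : MulAut.conj (M * N⁻¹) = 1 := schur_conj_eq_one ρ hirr _ hT
    have h2 : MulAut.conj M = MulAut.conj N := by
      rw [map_mul, map_inv] at h1
      exact mul_inv_eq_one.mp h1
    exact Subtype.ext h2
  -- the chosen M's
  set Mg : G → unitary (V →L[ℂ] V) := fun g => (hconj g).choose with hMgdef
  have hMg : ∀ g : G, ∀ a : A, ρ (conjElem A g a) = (Mg g)⁻¹ * ρ a * (Mg g) :=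
    fun g => (hconj g).choose_spec
  have hone : ∀ a : A, ρ (conjElem A (1 : G) a) =
      (1 : unitary (V →L[ℂ] V))⁻¹ * ρ a * 1 := by
    intro a
    have : conjElem A (1 : G) a = a := by
      apply Subtype.ext; simp [conjElem]
    rw [this]; simp
  have hmul : ∀ g h : G, ∀ a : A, ρ (conjElem A (g * h) a) =
      (Mg g * Mg h)⁻¹ * ρ a * (Mg g * Mg h) := by
    intro g h a
    have hc : conjElem A (g * h) a = conjElem A h (conjElem A g a) := by
      apply Subtype.ext; simp [conjElem]; group
    rw [hc, hMg h, hMg g, mul_inv_rev]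
    simp [mul_assoc]
  set f0 : G →* p.range :=
    { toFun := fun g => p.rangeRestrict (Mg g)
      map_one' := by
        show p.rangeRestrict (Mg 1) = 1
        rw [wd 1 (Mg 1) 1 (hMg 1) hone, map_one]
      map_mul' := by
        intro g h
        show p.rangeRestrict (Mg (g * h)) = p.rangeRestrict (Mg g) * p.rangeRestrict (Mg h)
        rw [wd (g * h) (Mg (g * h)) (Mg g * Mg h) (hMg _) (hmul g h), map_mul] } with hf0
  have hf0prop : ∀ (g : G) (M : unitary (V →L[ℂ] V)),
      (∀ a : A, ρ (conjElem A g a) = M⁻¹ * ρ a * M) →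
      f0 g = p.rangeRestrict M := fun g M hM => wd g (Mg g) M (hMg g) hM
  have hrho : ∀ f : G →* p.range,
      (∀ (g : G) (M : unitary (V →L[ℂ] V)),
        (∀ a : A, ρ (conjElem A g a) = M⁻¹ * ρ a * M) →
        f g = p.rangeRestrict M) →
      ∀ a : A, f (a : G) = p.rangeRestrict (ρ a) := by
    intro f hf a
    apply hf (a : G) (ρ a)
    intro b
    have : conjElem A (a : G) b = a⁻¹ * b * a := by
      apply Subtype.ext; simp [conjElem]
    rw [this, map_mul, map_mul, map_inv]
  refine ⟨⟨f0, hf0prop, ?_⟩, hrho⟩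
  intro f hf
  apply MonoidHom.ext
  intro g
  rw [hf g (Mg g) (hMg g)]
  exact (hf0prop g (Mg g) (hMg g)).symm
end

section
/- Let ρ: A → U(V) be an irreducible unitary representation of A on a nonzero finite-dimensional complex inner product space V, where A is a normal subgroup of a finite group G with quotient Q = G/A, and suppose that for every g ∈ G the conjugate representation a ↦ ρ(g⁻¹ a g) is unitarily equivalent to ρ. Choose a set-theoretic section σ: Q → G of the quotient map π with σ(1) = 1, and for each q ∈ Q an element M_q ∈ U(V) with M_1 = 1 and ρ(σ(q)⁻¹ a σ(q)) = M_q⁻¹ ρ(a) M_q for all a ∈ A. Then for all q₁, q₂ ∈ Q the unitary ρ(χ(q₁,q₂)) M_{q₂}⁻¹ M_{q₁}⁻¹ M_{q₁q₂} is a scalar α_ρ(q₁,q₂) · id_V with α_ρ(q₁,q₂) ∈ S¹ (the unit complex numbers), and ρ extends to a group homomorphism ρ̃: G → U(V) with ρ̃|_A = ρ if and only if α_ρ is a coboundary, i.e. there exists ε: Q → S¹ with α_ρ(q₁,q₂) = ε(q₁) ε(q₂) ε(q₁q₂)⁻¹ for all q₁, q₂ ∈ Q. -/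
set_option linter.unusedSectionVars false
set_option maxHeartbeats 1000000


namespace SCEaux

/-- Forward conjugation `a ↦ σ(q) a σ(q)⁻¹` inside `A`. -/
def cElem {G : Type*} [Group G] (A : Subgroup G) [hA : A.Normal] (σ : G ⧸ A → G)
    (q : G ⧸ A) (a : A) : A :=
  ⟨σ q * a * (σ q)⁻¹, by simpa using hA.conj_mem a.1 a.2 (σ q)⟩

/-- The `A` part of `g`, i.e. `g σ(π g)⁻¹`. -/
def aPart {G : Type*} [Group G] (A : Subgroup G) [A.Normal] (σ : G ⧸ A → G)
    (hσ : ∀ q, QuotientGroup.mk' A (σ q) = q) (g : G) : A :=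
  ⟨g * (σ (QuotientGroup.mk' A g))⁻¹, by
    have h : QuotientGroup.mk' A (g * (σ (QuotientGroup.mk' A g))⁻¹) = 1 := by
      rw [map_mul, map_inv, hσ]; group
    simpa using (QuotientGroup.eq_one_iff _).mp h⟩

section grp
variable {G : Type*} [Group G] (A : Subgroup G) [A.Normal] (σ : G ⧸ A → G)
    (hσ : ∀ q, QuotientGroup.mk' A (σ q) = q)

lemma psi_cElem (q : G ⧸ A) (a : A) : psi A σ q (cElem A σ q a) = a := by
  apply Subtype.ext; simp [psi, cElem]; group

lemma chi_mul_psi (q₁ q₂ : G ⧸ A) (b : A) :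
    chi A σ hσ q₁ q₂ * psi A σ q₂ (psi A σ q₁ (cElem A σ (q₁ * q₂) b)) =
      b * chi A σ hσ q₁ q₂ := by
  apply Subtype.ext
  simp only [chi, psi, cElem, Subgroup.coe_mul, MulMemClass.mk_mul_mk]
  group

lemma chi_one_one (hσ1 : σ 1 = 1) : chi A σ hσ 1 1 = 1 := by
  apply Subtype.ext
  simp [chi, hσ1]

lemma aPart_mul (g₁ g₂ : G) :
    aPart A σ hσ (g₁ * g₂) =
      aPart A σ hσ g₁ * cElem A σ (QuotientGroup.mk' A g₁) (aPart A σ hσ g₂) *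
        cElem A σ (QuotientGroup.mk' A g₁ * QuotientGroup.mk' A g₂)
          (chi A σ hσ (QuotientGroup.mk' A g₁) (QuotientGroup.mk' A g₂)) := by
  apply Subtype.ext
  simp only [aPart, cElem, chi, Subgroup.coe_mul, MulMemClass.mk_mul_mk, map_mul]
  group

lemma aPart_coe (hσ1 : σ 1 = 1) (a : A) : aPart A σ hσ (a : G) = a := by
  have h1 : QuotientGroup.mk' A (a : G) = 1 := (QuotientGroup.eq_one_iff _).mpr a.2
  apply Subtype.ext
  simp [aPart, h1, hσ1]

lemma aPart_one (hσ1 : σ 1 = 1) : aPart A σ hσ (1 : G) = 1 := by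
  apply Subtype.ext
  simp [aPart, hσ1]

end grp

section clm
variable {V : Type*} [NormedAddCommGroup V]
    [InnerProductSpace ℂ V] [FiniteDimensional ℂ V] [Nontrivial V]

lemma myCoeInv (U : unitary (V →L[ℂ] V)) :
    ((U⁻¹ : unitary (V →L[ℂ] V)) : V →L[ℂ] V) = star (U : V →L[ℂ] V) := by
  rw [← Unitary.star_eq_inv]; rfl

lemma coe_star_mul (U : unitary (V →L[ℂ] V)) :
    star (U : V →L[ℂ] V) * (U : V →L[ℂ] V) = 1 := Unitary.coe_star_mul_self U

lemma coe_mul_star (U : unitary (V →L[ℂ] V)) :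
    (U : V →L[ℂ] V) * star (U : V →L[ℂ] V) = 1 := Unitary.coe_mul_star_self U

lemma star_mul_cancel (U : unitary (V →L[ℂ] V)) (x : V →L[ℂ] V) :
    star (U : V →L[ℂ] V) * ((U : V →L[ℂ] V) * x) = x := by
  rw [← mul_assoc, coe_star_mul, one_mul]

lemma mul_star_cancel (U : unitary (V →L[ℂ] V)) (x : V →L[ℂ] V) :
    (U : V →L[ℂ] V) * (star (U : V →L[ℂ] V) * x) = x := by
  rw [← mul_assoc, coe_mul_star, one_mul]

lemma scalar_inj {c d : ℂ} (h : c • (1 : V →L[ℂ] V) = d • 1) : c = d := by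
  obtain ⟨v, hv⟩ := exists_ne (0 : V)
  have := congrArg (fun f : V →L[ℂ] V => f v) h
  simp only [ContinuousLinearMap.smul_apply, ContinuousLinearMap.one_apply] at this
  exact smul_left_injective ℂ hv this

lemma unit_norm {U : unitary (V →L[ℂ] V)} {c : ℂ}
    (h : (U : V →L[ℂ] V) = c • 1) : ‖c‖ = 1 := by
  have h1 : star (U : V →L[ℂ] V) * U = 1 := Unitary.coe_star_mul_self U
  rw [h, star_smul, star_one, smul_mul_smul_comm, one_mul] at h1
  have hcc : star c * c = 1 := scalar_inj (V := V) (by rw [h1, one_smul])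
  have h3 : ‖c‖ * ‖c‖ = 1 := by
    have h4 := congrArg norm hcc
    simpa [norm_mul] using h4
  nlinarith [norm_nonneg c]

lemma smul_mem_unitary {c : ℂ} (hc : ‖c‖ = 1) (u : unitary (V →L[ℂ] V)) :
    c • (u : V →L[ℂ] V) ∈ unitary (V →L[ℂ] V) := by
  have hcc : star c * c = 1 := by
    have : star c * c = (‖c‖ : ℂ) ^ 2 := RCLike.conj_mul c
    rw [this, hc]; norm_num
  have hcc' : c * star c = 1 := by rw [mul_comm]; exact hcc
  constructor
  · rw [star_smul, smul_mul_smul_comm, hcc, coe_star_mul, one_smul]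
  · rw [star_smul, smul_mul_smul_comm, hcc', coe_mul_star, one_smul]

lemma schur {H : Type*} [Group H] (ρ : H →* unitary (V →L[ℂ] V))
    (hirr : IsIrreducibleUnitaryRep ρ)
    (T : V →L[ℂ] V) (hT : ∀ h : H, T * (ρ h : V →L[ℂ] V) = (ρ h : V →L[ℂ] V) * T) :
    ∃ c : ℂ, T = c • (1 : V →L[ℂ] V) := by
  obtain ⟨c, hc⟩ := Module.End.exists_eigenvalue (T : V →ₗ[ℂ] V)
  refine ⟨c, ?_⟩
  have hW := hirr (Module.End.eigenspace (T : V →ₗ[ℂ] V) c) ?_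
  · rcases hW with h | h
    · exact absurd h hc
    · ext v
      have hv : v ∈ Module.End.eigenspace (T : V →ₗ[ℂ] V) c := h ▸ Submodule.mem_top
      have := Module.End.mem_eigenspace_iff.mp hv
      simpa using this
  · intro h v hv
    have hv' : T v = c • v := Module.End.mem_eigenspace_iff.mp hv
    refine Module.End.mem_eigenspace_iff.mpr ?_
    have h2 := congrArg (fun (f : V →L[ℂ] V) => f v) (hT h)
    simp only [ContinuousLinearMap.mul_apply] at h2
    show T _ = c • _
    rw [h2, hv', map_smul]

end clm

end SCEaux


open SCEaux in
/-- Let `ρ : A → U(V)` be an irreducible unitary representation of a normal subgroup `A` of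
a finite group `G` on a nonzero finite-dimensional complex inner product space `V`, all of
whose `G`-conjugates are unitarily equivalent to `ρ`.  Choose a set-theoretic section
`σ : Q = G/A → G` of the quotient map with `σ(1) = 1` and for each `q ∈ Q` a unitary `M_q`
with `M_1 = 1` and `ρ(σ(q)⁻¹ a σ(q)) = M_q⁻¹ ρ(a) M_q` for all `a ∈ A`.  Then for all
`q₁, q₂ ∈ Q` the unitary `ρ(χ(q₁,q₂)) M_{q₂}⁻¹ M_{q₁}⁻¹ M_{q₁q₂}` is a scalar
`α_ρ(q₁,q₂) · id_V` with `α_ρ(q₁,q₂) ∈ S¹`, and `ρ` extends to a group homomorphism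
`ρ̃ : G → U(V)` with `ρ̃|_A = ρ` if and only if `α_ρ` is a coboundary, i.e. there is
`ε : Q → S¹` with `α_ρ(q₁,q₂) = ε(q₁) ε(q₂) ε(q₁q₂)⁻¹`. -/
theorem scalar_cocycle_and_extension_iff_coboundary
    {G : Type*} [Group G] [Finite G] (A : Subgroup G) [A.Normal]
    {V : Type*} [NormedAddCommGroup V] [InnerProductSpace ℂ V]
    [FiniteDimensional ℂ V] [Nontrivial V]
    (ρ : A →* unitary (V →L[ℂ] V)) (hirr : IsIrreducibleUnitaryRep ρ)
    (hconjall : ∀ g : G, ∃ N : unitary (V →L[ℂ] V),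
      ∀ a : A, ρ (conjElem A g a) = N⁻¹ * ρ a * N)
    (σ : G ⧸ A → G) (hσ : ∀ q, QuotientGroup.mk' A (σ q) = q) (hσ1 : σ 1 = 1)
    (M : G ⧸ A → unitary (V →L[ℂ] V)) (hM1 : M 1 = 1)
    (hMconj : ∀ (q : G ⧸ A) (a : A), ρ (psi A σ q a) = (M q)⁻¹ * ρ a * M q) :
    ∃ α : G ⧸ A → G ⧸ A → ℂ,
      (∀ q₁ q₂ : G ⧸ A, ‖α q₁ q₂‖ = 1 ∧
        ((ρ (chi A σ hσ q₁ q₂) * (M q₂)⁻¹ * (M q₁)⁻¹ * M (q₁ * q₂) :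
            unitary (V →L[ℂ] V)) : V →L[ℂ] V) = α q₁ q₂ • (1 : V →L[ℂ] V)) ∧
      ((∃ ρt : G →* unitary (V →L[ℂ] V), ∀ a : A, ρt (a : G) = ρ a) ↔
        (∃ ε : G ⧸ A → ℂ, (∀ q, ‖ε q‖ = 1) ∧
          ∀ q₁ q₂ : G ⧸ A, α q₁ q₂ = ε q₁ * ε q₂ * (ε (q₁ * q₂))⁻¹)) := by
  classical
  -- basic conjugation facts at the unitary-group level
  have hfwd : ∀ (q : G ⧸ A) (a : A), M q * ρ a = ρ (cElem A σ q a) * M q := by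
    intro q a
    have h : ρ a = (M q)⁻¹ * ρ (cElem A σ q a) * M q := by
      rw [← hMconj, psi_cElem]
    rw [h]; group
  have hback : ∀ (q : G ⧸ A) (a : A), (M q)⁻¹ * ρ a = ρ (psi A σ q a) * (M q)⁻¹ := by
    intro q a; rw [hMconj]; group
  -- the scalars α
  have hmain : ∀ q₁ q₂ : G ⧸ A, ∃ c : ℂ, ‖c‖ = 1 ∧
      ((ρ (chi A σ hσ q₁ q₂) * (M q₂)⁻¹ * (M q₁)⁻¹ * M (q₁ * q₂) :
          unitary (V →L[ℂ] V)) : V →L[ℂ] V) = c • (1 : V →L[ℂ] V) := by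
    intro q₁ q₂
    set T : unitary (V →L[ℂ] V) :=
      ρ (chi A σ hσ q₁ q₂) * (M q₂)⁻¹ * (M q₁)⁻¹ * M (q₁ * q₂) with hTdef
    have hcomm : ∀ b : A, T * ρ b = ρ b * T := by
      intro b
      set c₀ := cElem A σ (q₁ * q₂) b with hc₀
      set c₁ := psi A σ q₁ c₀ with hc₁
      set c₂ := psi A σ q₂ c₁ with hc₂
      have s1 : M (q₁ * q₂) * ρ b = ρ c₀ * M (q₁ * q₂) := hfwd _ _
      have s2 : (M q₁)⁻¹ * ρ c₀ = ρ c₁ * (M q₁)⁻¹ := hback _ _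
      have s3 : (M q₂)⁻¹ * ρ c₁ = ρ c₂ * (M q₂)⁻¹ := hback _ _
      have s4 : ρ (chi A σ hσ q₁ q₂) * ρ c₂ = ρ b * ρ (chi A σ hσ q₁ q₂) := by
        rw [← map_mul, ← map_mul, hc₂, hc₁, hc₀, chi_mul_psi]
      calc T * ρ b
          = ρ (chi A σ hσ q₁ q₂) * (M q₂)⁻¹ * (M q₁)⁻¹ * (M (q₁ * q₂) * ρ b) := by
            rw [hTdef]; group
        _ = ρ (chi A σ hσ q₁ q₂) * (M q₂)⁻¹ * ((M q₁)⁻¹ * ρ c₀) * M (q₁ * q₂) := by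
            rw [s1]; group
        _ = ρ (chi A σ hσ q₁ q₂) * ((M q₂)⁻¹ * ρ c₁) * (M q₁)⁻¹ * M (q₁ * q₂) := by
            rw [s2]; group
        _ = (ρ (chi A σ hσ q₁ q₂) * ρ c₂) * (M q₂)⁻¹ * (M q₁)⁻¹ * M (q₁ * q₂) := by
            rw [s3]; group
        _ = ρ b * T := by rw [s4, hTdef]; group
    have hcommC : ∀ b : A,
        (T : V →L[ℂ] V) * (ρ b : V →L[ℂ] V) = (ρ b : V →L[ℂ] V) * (T : V →L[ℂ] V) := by
      intro b
      have h := congrArg Subtype.val (hcomm b)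
      simpa using h
    obtain ⟨c, hc⟩ := schur ρ hirr (T : V →L[ℂ] V) hcommC
    exact ⟨c, unit_norm hc, hc⟩
  choose α hαn hαe using hmain
  have hα11 : α 1 1 = 1 := by
    have h := hαe 1 1
    rw [chi_one_one A σ hσ hσ1, map_one, show (1 : G ⧸ A) * 1 = 1 from mul_one 1,
      hM1] at h
    refine (scalar_inj (V := V) ?_).symm
    rw [← h, inv_one, mul_one, mul_one, one_mul, OneMemClass.coe_one, one_smul]
  refine ⟨α, fun q₁ q₂ => ⟨hαn q₁ q₂, hαe q₁ q₂⟩, ?_⟩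
  constructor
  · -- extension → coboundary
    rintro ⟨ρt, hρt⟩
    set N : G ⧸ A → unitary (V →L[ℂ] V) := fun q => ρt (σ q) with hNdef
    have hNconj : ∀ (q : G ⧸ A) (a : A), ρ (psi A σ q a) = (N q)⁻¹ * ρ a * N q := by
      intro q a
      calc ρ (psi A σ q a) = ρt ((psi A σ q a : A) : G) := (hρt _).symm
        _ = ρt ((σ q)⁻¹ * (a : G) * σ q) := rfl
        _ = (ρt (σ q))⁻¹ * ρt (a : G) * ρt (σ q) := by rw [map_mul, map_mul, map_inv]
        _ = (N q)⁻¹ * ρ a * N q := by rw [hρt, hNdef]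
    have hDcomm : ∀ (q : G ⧸ A) (a : A),
        (N q * (M q)⁻¹) * ρ a = ρ a * (N q * (M q)⁻¹) := by
      intro q a
      calc N q * (M q)⁻¹ * ρ a
          = N q * ((M q)⁻¹ * ρ a * M q) * (M q)⁻¹ := by group
        _ = N q * ((N q)⁻¹ * ρ a * N q) * (M q)⁻¹ := by rw [← hMconj, ← hNconj]
        _ = ρ a * (N q * (M q)⁻¹) := by group
    have hDscal : ∀ q : G ⧸ A, ∃ d : ℂ, ‖d‖ = 1 ∧
        ((N q * (M q)⁻¹ : unitary (V →L[ℂ] V)) : V →L[ℂ] V) = d • 1 := by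
      intro q
      have hcommC : ∀ b : A,
          ((N q * (M q)⁻¹ : unitary (V →L[ℂ] V)) : V →L[ℂ] V) * (ρ b : V →L[ℂ] V)
            = (ρ b : V →L[ℂ] V) * ((N q * (M q)⁻¹ : unitary (V →L[ℂ] V)) : V →L[ℂ] V) := by
        intro b
        have h := congrArg Subtype.val (hDcomm q b)
        simpa using h
      obtain ⟨d, hd⟩ := schur ρ hirr _ hcommC
      exact ⟨d, unit_norm hd, hd⟩
    choose δ hδn hδe using hDscal
    have hn : ∀ q : G ⧸ A, ((N q : unitary (V →L[ℂ] V)) : V →L[ℂ] V)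
        = δ q • ((M q : unitary (V →L[ℂ] V)) : V →L[ℂ] V) := by
      intro q
      have h := hδe q
      rw [MulMemClass.coe_mul, myCoeInv] at h
      have h2 := congrArg (· * ((M q : unitary (V →L[ℂ] V)) : V →L[ℂ] V)) h
      simpa [mul_assoc, coe_star_mul, smul_mul_assoc] using h2
    refine ⟨δ, hδn, ?_⟩
    intro q₁ q₂
    have hNchi : ρ (chi A σ hσ q₁ q₂) = (N (q₁ * q₂))⁻¹ * N q₁ * N q₂ := by
      calc ρ (chi A σ hσ q₁ q₂) = ρt ((chi A σ hσ q₁ q₂ : A) : G) := (hρt _).symm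
        _ = ρt ((σ (q₁ * q₂))⁻¹ * σ q₁ * σ q₂) := rfl
        _ = (ρt (σ (q₁ * q₂)))⁻¹ * ρt (σ q₁) * ρt (σ q₂) := by
            rw [map_mul, map_mul, map_inv]
        _ = (N (q₁ * q₂))⁻¹ * N q₁ * N q₂ := rfl
    have hTu := hαe q₁ q₂
    rw [hNchi] at hTu
    rw [MulMemClass.coe_mul, MulMemClass.coe_mul, MulMemClass.coe_mul,
      MulMemClass.coe_mul, MulMemClass.coe_mul, myCoeInv, myCoeInv, myCoeInv,
      hn, hn, hn, star_smul] at hTu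
    simp only [smul_mul_assoc, mul_smul_comm, smul_smul, mul_assoc,
      star_mul_cancel, mul_star_cancel, coe_star_mul] at hTu
    have hscal : (starRingEnd ℂ) (δ (q₁ * q₂)) * (δ q₁ * δ q₂) = α q₁ q₂ := by
      apply scalar_inj (V := V)
      rw [← hTu]
      simp [smul_smul]; ring_nf
    have hinv : (starRingEnd ℂ) (δ (q₁ * q₂)) = (δ (q₁ * q₂))⁻¹ := by
      have hnz : δ (q₁ * q₂) ≠ 0 := by
        intro h0; have := hδn (q₁ * q₂); rw [h0] at this; simp at this
      field_simp
      rw [RCLike.conj_mul]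
      norm_cast
      rw [hδn (q₁ * q₂)]; norm_num
    rw [← hscal, hinv]; ring
  · -- coboundary → extension
    rintro ⟨ε, hεn, hεc⟩
    have hεnz : ∀ q, ε q ≠ 0 := by
      intro q h0; have := hεn q; rw [h0] at this; simp at this
    have hε1 : ε 1 = 1 := by
      have h := hεc 1 1
      rw [hα11, show (1 : G ⧸ A) * 1 = 1 from mul_one 1,
        mul_inv_cancel_right₀ (hεnz 1)] at h
      exact h.symm
    refine ⟨MonoidHom.mk' (fun g =>
        (⟨ε (QuotientGroup.mk' A g) •
          ((ρ (aPart A σ hσ g) * M (QuotientGroup.mk' A g) : unitary (V →L[ℂ] V)) :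
            V →L[ℂ] V),
          smul_mem_unitary (hεn _) _⟩ : unitary (V →L[ℂ] V))) ?_, ?_⟩
    · intro g₁ g₂
      apply Subtype.ext
      show ε (QuotientGroup.mk' A (g₁ * g₂)) •
          ((ρ (aPart A σ hσ (g₁ * g₂)) * M (QuotientGroup.mk' A (g₁ * g₂)) :
            unitary (V →L[ℂ] V)) : V →L[ℂ] V)
        = (ε (QuotientGroup.mk' A g₁) •
            ((ρ (aPart A σ hσ g₁) * M (QuotientGroup.mk' A g₁) : unitary (V →L[ℂ] V)) :
              V →L[ℂ] V)) *
          (ε (QuotientGroup.mk' A g₂) •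
            ((ρ (aPart A σ hσ g₂) * M (QuotientGroup.mk' A g₂) : unitary (V →L[ℂ] V)) :
              V →L[ℂ] V))
      set q₁ := QuotientGroup.mk' A g₁ with hq₁
      set q₂ := QuotientGroup.mk' A g₂ with hq₂
      have hq : QuotientGroup.mk' A (g₁ * g₂) = q₁ * q₂ := map_mul _ _ _
      rw [hq, aPart_mul A σ hσ g₁ g₂]
      -- auxiliary scalar identity for M (q₁q₂) ρ(χ)
      have hTc : ((((ρ (chi A σ hσ q₁ q₂))⁻¹ *
            (ρ (chi A σ hσ q₁ q₂) * (M q₂)⁻¹ * (M q₁)⁻¹ * M (q₁ * q₂)) *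
            ρ (chi A σ hσ q₁ q₂) : unitary (V →L[ℂ] V))) : V →L[ℂ] V)
          = α q₁ q₂ • 1 := by
        rw [MulMemClass.coe_mul, MulMemClass.coe_mul, myCoeInv, hαe]
        simp [mul_smul_comm, smul_mul_assoc, coe_star_mul, mul_assoc]
      have hm12 : ((M (q₁ * q₂) * ρ (chi A σ hσ q₁ q₂) : unitary (V →L[ℂ] V)) :
            V →L[ℂ] V) = α q₁ q₂ • ((M q₁ * M q₂ : unitary (V →L[ℂ] V)) : V →L[ℂ] V) := by
        have hg : M (q₁ * q₂) * ρ (chi A σ hσ q₁ q₂)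
            = (M q₁ * M q₂) * ((ρ (chi A σ hσ q₁ q₂))⁻¹ *
              (ρ (chi A σ hσ q₁ q₂) * (M q₂)⁻¹ * (M q₁)⁻¹ * M (q₁ * q₂)) *
              ρ (chi A σ hσ q₁ q₂)) := by group
        rw [hg, MulMemClass.coe_mul, hTc, mul_smul_comm, mul_one]
      have hu1 : ρ (aPart A σ hσ g₁ * cElem A σ q₁ (aPart A σ hσ g₂) *
            cElem A σ (q₁ * q₂) (chi A σ hσ q₁ q₂)) * M (q₁ * q₂)
          = ρ (aPart A σ hσ g₁) * ρ (cElem A σ q₁ (aPart A σ hσ g₂)) *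
            (M (q₁ * q₂) * ρ (chi A σ hσ q₁ q₂)) := by
        calc ρ (aPart A σ hσ g₁ * cElem A σ q₁ (aPart A σ hσ g₂) *
              cElem A σ (q₁ * q₂) (chi A σ hσ q₁ q₂)) * M (q₁ * q₂)
            = ρ (aPart A σ hσ g₁) * ρ (cElem A σ q₁ (aPart A σ hσ g₂)) *
              (ρ (cElem A σ (q₁ * q₂) (chi A σ hσ q₁ q₂)) * M (q₁ * q₂)) := by
              rw [map_mul, map_mul]; group
          _ = _ := by rw [← hfwd]
      have hu2 : ρ (aPart A σ hσ g₁) * M q₁ * (ρ (aPart A σ hσ g₂) * M q₂)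
          = ρ (aPart A σ hσ g₁) * ρ (cElem A σ q₁ (aPart A σ hσ g₂)) * (M q₁ * M q₂) := by
        calc ρ (aPart A σ hσ g₁) * M q₁ * (ρ (aPart A σ hσ g₂) * M q₂)
            = ρ (aPart A σ hσ g₁) * (M q₁ * ρ (aPart A σ hσ g₂)) * M q₂ := by group
          _ = ρ (aPart A σ hσ g₁) * (ρ (cElem A σ q₁ (aPart A σ hσ g₂)) * M q₁) * M q₂ := by
              rw [hfwd]
          _ = _ := by group
      have hKey : ((ρ (aPart A σ hσ g₁ * cElem A σ q₁ (aPart A σ hσ g₂) *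
            cElem A σ (q₁ * q₂) (chi A σ hσ q₁ q₂)) * M (q₁ * q₂) :
              unitary (V →L[ℂ] V)) : V →L[ℂ] V)
          = α q₁ q₂ • (((ρ (aPart A σ hσ g₁) * M q₁ : unitary (V →L[ℂ] V)) : V →L[ℂ] V) *
              ((ρ (aPart A σ hσ g₂) * M q₂ : unitary (V →L[ℂ] V)) : V →L[ℂ] V)) := by
        calc ((ρ (aPart A σ hσ g₁ * cElem A σ q₁ (aPart A σ hσ g₂) *
              cElem A σ (q₁ * q₂) (chi A σ hσ q₁ q₂)) * M (q₁ * q₂) :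
                unitary (V →L[ℂ] V)) : V →L[ℂ] V)
            = ((ρ (aPart A σ hσ g₁) * ρ (cElem A σ q₁ (aPart A σ hσ g₂)) *
                (M (q₁ * q₂) * ρ (chi A σ hσ q₁ q₂)) : unitary (V →L[ℂ] V)) :
                  V →L[ℂ] V) := by rw [hu1]
          _ = ((ρ (aPart A σ hσ g₁) * ρ (cElem A σ q₁ (aPart A σ hσ g₂)) :
                unitary (V →L[ℂ] V)) : V →L[ℂ] V) *
              ((M (q₁ * q₂) * ρ (chi A σ hσ q₁ q₂) : unitary (V →L[ℂ] V)) :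
                V →L[ℂ] V) := rfl
          _ = α q₁ q₂ • (((ρ (aPart A σ hσ g₁) * ρ (cElem A σ q₁ (aPart A σ hσ g₂)) :
                unitary (V →L[ℂ] V)) : V →L[ℂ] V) *
              ((M q₁ * M q₂ : unitary (V →L[ℂ] V)) : V →L[ℂ] V)) := by
              rw [hm12, mul_smul_comm]
          _ = α q₁ q₂ • ((ρ (aPart A σ hσ g₁) * ρ (cElem A σ q₁ (aPart A σ hσ g₂)) *
                (M q₁ * M q₂) : unitary (V →L[ℂ] V)) : V →L[ℂ] V) := by
              simp only [MulMemClass.coe_mul]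
          _ = α q₁ q₂ • ((ρ (aPart A σ hσ g₁) * M q₁ * (ρ (aPart A σ hσ g₂) * M q₂) :
                unitary (V →L[ℂ] V)) : V →L[ℂ] V) := by rw [hu2]
          _ = _ := by rw [MulMemClass.coe_mul]
      rw [hKey, smul_smul, smul_mul_smul_comm]
      congr 1
      rw [hεc q₁ q₂]
      field_simp [hεnz (q₁ * q₂)]
    · intro a
      apply Subtype.ext
      have hmk : QuotientGroup.mk' A (a : G) = 1 := (QuotientGroup.eq_one_iff _).mpr a.2
      show ε (QuotientGroup.mk' A (a : G)) •
          ((ρ (aPart A σ hσ (a : G)) * M (QuotientGroup.mk' A (a : G)) :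
            unitary (V →L[ℂ] V)) : V →L[ℂ] V) = ((ρ a : unitary (V →L[ℂ] V)) : V →L[ℂ] V)
      rw [hmk, aPart_coe A σ hσ hσ1, hM1, hε1]
      simp
end

section
/- Let ρ: A → U(V) be an irreducible unitary representation with conjugates g · ρ unitarily equivalent to ρ for all g ∈ G, with section σ (σ(1)=1), unitaries M_q (M_1 = 1, ρ(σ(q)⁻¹ a σ(q)) = M_q⁻¹ ρ(a) M_q) and scalar cocycle α_ρ: Q × Q → S¹ defined by ρ(χ(q₁,q₂)) M_{q₂}⁻¹ M_{q₁}⁻¹ M_{q₁q₂} = α_ρ(q₁,q₂) · id_V. Let θ: G → U(W) be a unitary representation of G on a finite-dimensional complex inner product space W, and let Hom_A(V,W) denote the space of linear maps f: V → W with f ∘ ρ(a) = θ(a) ∘ f for all a ∈ A. For q ∈ Q and f ∈ Hom_A(V,W) define q • f := θ(σ(q)) ∘ f ∘ M_q⁻¹. Then q • f ∈ Hom_A(V,W), and for all q₁, q₂ ∈ Q and f ∈ Hom_A(V,W) one has q₁ • (q₂ • f) = α_ρ(q₁,q₂) · ((q₁q₂) • f). -/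
/-- The action `q • f := θ(σ(q)) ∘ f ∘ M_q⁻¹` on linear maps `f : V → W`. -/
noncomputable def qBullet {G : Type*} [Group G] (A : Subgroup G) [A.Normal]
    {V W : Type*} [NormedAddCommGroup V] [InnerProductSpace ℂ V] [FiniteDimensional ℂ V]
    [NormedAddCommGroup W] [InnerProductSpace ℂ W] [FiniteDimensional ℂ W]
    (θ : G →* unitary (W →L[ℂ] W)) (σ : G ⧸ A → G)
    (M : G ⧸ A → unitary (V →L[ℂ] V)) (q : G ⧸ A) (f : V →L[ℂ] W) : V →L[ℂ] W :=
  (((θ (σ q)) : W →L[ℂ] W).comp f).comp (((M q)⁻¹ : unitary (V →L[ℂ] V)) : V →L[ℂ] V)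

/-- Let `ρ : A → U(V)` be an irreducible unitary representation of a normal subgroup `A` of
a finite group `G`, all of whose `G`-conjugates are unitarily equivalent to `ρ`, with
section `σ` (`σ(1) = 1`), unitaries `M_q` (`M_1 = 1`,
`ρ(σ(q)⁻¹ a σ(q)) = M_q⁻¹ ρ(a) M_q`), and scalar cocycle `α_ρ : Q × Q → S¹` defined by
`ρ(χ(q₁,q₂)) M_{q₂}⁻¹ M_{q₁}⁻¹ M_{q₁q₂} = α_ρ(q₁,q₂) · id_V`.  Let `θ : G → U(W)` be a
unitary representation of `G` and `Hom_A(V,W)` the space of linear maps `f : V → W` with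
`f ∘ ρ(a) = θ(a) ∘ f` for all `a ∈ A`.  For `q ∈ Q` and `f ∈ Hom_A(V,W)` define
`q • f := θ(σ(q)) ∘ f ∘ M_q⁻¹`.  Then `q • f ∈ Hom_A(V,W)` and
`q₁ • (q₂ • f) = α_ρ(q₁,q₂) · ((q₁q₂) • f)`. -/
theorem qBullet_equivariant_and_projective
    {G : Type*} [Group G] [Finite G] (A : Subgroup G) [A.Normal]
    {V W : Type*} [NormedAddCommGroup V] [InnerProductSpace ℂ V]
    [FiniteDimensional ℂ V] [Nontrivial V]
    [NormedAddCommGroup W] [InnerProductSpace ℂ W] [FiniteDimensional ℂ W]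
    (ρ : A →* unitary (V →L[ℂ] V)) (hirr : IsIrreducibleUnitaryRep ρ)
    (hconjall : ∀ g : G, ∃ N : unitary (V →L[ℂ] V),
      ∀ a : A, ρ (conjElem A g a) = N⁻¹ * ρ a * N)
    (σ : G ⧸ A → G) (hσ : ∀ q, QuotientGroup.mk' A (σ q) = q) (hσ1 : σ 1 = 1)
    (M : G ⧸ A → unitary (V →L[ℂ] V)) (hM1 : M 1 = 1)
    (hMconj : ∀ (q : G ⧸ A) (a : A), ρ (psi A σ q a) = (M q)⁻¹ * ρ a * M q)
    (α : G ⧸ A → G ⧸ A → ℂ) (hαnorm : ∀ q₁ q₂, ‖α q₁ q₂‖ = 1)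
    (hα : ∀ q₁ q₂ : G ⧸ A,
      ((ρ (chi A σ hσ q₁ q₂) * (M q₂)⁻¹ * (M q₁)⁻¹ * M (q₁ * q₂) :
          unitary (V →L[ℂ] V)) : V →L[ℂ] V) = α q₁ q₂ • (1 : V →L[ℂ] V))
    (θ : G →* unitary (W →L[ℂ] W)) :
    ∀ f : V →L[ℂ] W,
      (∀ a : A, f.comp ((ρ a : V →L[ℂ] V)) = ((θ (a : G)) : W →L[ℂ] W).comp f) →
      (∀ (q : G ⧸ A) (a : A),
        (qBullet A θ σ M q f).comp ((ρ a : V →L[ℂ] V)) =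
          ((θ (a : G)) : W →L[ℂ] W).comp (qBullet A θ σ M q f)) ∧
      (∀ q₁ q₂ : G ⧸ A,
        qBullet A θ σ M q₁ (qBullet A θ σ M q₂ f) =
          α q₁ q₂ • qBullet A θ σ M (q₁ * q₂) f) := by
  intro f hf
  constructor
  · intro q a
    -- key : M_q⁻¹ ∘ ρ a = ρ(ψ q a) ∘ M_q⁻¹ at the CLM level
    have keyU : ρ (psi A σ q a) * (M q)⁻¹ = (M q)⁻¹ * ρ a := by
      rw [hMconj]; group
    have key : ((ρ (psi A σ q a) : V →L[ℂ] V)) * (((M q)⁻¹ : unitary (V →L[ℂ] V)) : V →L[ℂ] V)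
        = (((M q)⁻¹ : unitary (V →L[ℂ] V)) : V →L[ℂ] V) * ((ρ a : V →L[ℂ] V)) := by
      simpa using congrArg (fun u : unitary (V →L[ℂ] V) => (u : V →L[ℂ] V)) keyU
    ext v
    simp only [qBullet, ContinuousLinearMap.comp_apply]
    have h1 : (((M q)⁻¹ : unitary (V →L[ℂ] V)) : V →L[ℂ] V) ((ρ a : V →L[ℂ] V) v)
        = (ρ (psi A σ q a) : V →L[ℂ] V) ((((M q)⁻¹ : unitary (V →L[ℂ] V)) : V →L[ℂ] V) v) := by
      have := congrArg (fun T : V →L[ℂ] V => T v) key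
      simpa [ContinuousLinearMap.mul_apply] using this.symm
    rw [h1]
    have h2 := congrArg (fun T : V →L[ℂ] W => T ((((M q)⁻¹ : unitary (V →L[ℂ] V)) : V →L[ℂ] V) v))
      (hf (psi A σ q a))
    simp only [ContinuousLinearMap.comp_apply] at h2
    rw [h2]
    have h3 : ∀ (x y : G) (w : W), ((θ x : W →L[ℂ] W)) ((θ y : W →L[ℂ] W) w)
        = ((θ (x * y) : W →L[ℂ] W)) w := by
      intro x y w
      rw [map_mul]
      rfl
    rw [h3, h3]
    have h4 : σ q * ((psi A σ q a : A) : G) = ↑a * σ q := by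
      show σ q * ((σ q)⁻¹ * ↑a * σ q) = ↑a * σ q
      group
    rw [h4]
  · intro q₁ q₂
    set χv := chi A σ hσ q₁ q₂ with hχ
    -- coerced versions
    set u : V →L[ℂ] V := (ρ χv : V →L[ℂ] V) with hu
    set u' : V →L[ℂ] V := (((ρ χv)⁻¹ : unitary (V →L[ℂ] V)) : V →L[ℂ] V) with hu'
    set a : V →L[ℂ] V := (((M q₂)⁻¹ : unitary (V →L[ℂ] V)) : V →L[ℂ] V) with ha
    set b : V →L[ℂ] V := (((M q₁)⁻¹ : unitary (V →L[ℂ] V)) : V →L[ℂ] V) with hb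
    set m : V →L[ℂ] V := ((M (q₁ * q₂) : unitary (V →L[ℂ] V)) : V →L[ℂ] V) with hm
    set m' : V →L[ℂ] V := (((M (q₁ * q₂))⁻¹ : unitary (V →L[ℂ] V)) : V →L[ℂ] V) with hm'
    have hαc : u * a * b * m = α q₁ q₂ • 1 := by
      have h := hα q₁ q₂
      rw [MulMemClass.coe_mul, MulMemClass.coe_mul, MulMemClass.coe_mul] at h
      exact h
    have huu : u' * u = 1 := by
      have h := congrArg (fun z : unitary (V →L[ℂ] V) => (z : V →L[ℂ] V)) (inv_mul_cancel (ρ χv))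
      simp only [MulMemClass.coe_mul, OneMemClass.coe_one] at h
      exact h
    have hmm : m * m' = 1 := by
      have h := congrArg (fun z : unitary (V →L[ℂ] V) => (z : V →L[ℂ] V)) (mul_inv_cancel (M (q₁ * q₂)))
      simp only [MulMemClass.coe_mul, OneMemClass.coe_one] at h
      exact h
    have hab : a * b = α q₁ q₂ • (u' * m') := by
      calc a * b = (u' * u) * (a * b) * (m * m') := by rw [huu, hmm, one_mul, mul_one]
        _ = u' * (u * a * b * m) * m' := by noncomm_ring
        _ = u' * (α q₁ q₂ • (1 : V →L[ℂ] V)) * m' := by rw [hαc]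
        _ = α q₁ q₂ • (u' * m') := by
            rw [mul_smul_comm, smul_mul_assoc, mul_one]
    have hfu' : f.comp u' = ((θ ((χv : G)⁻¹) : W →L[ℂ] W)).comp f := by
      have : ρ χv⁻¹ = (ρ χv)⁻¹ := map_inv ρ χv
      have h := hf χv⁻¹
      rw [this] at h
      simpa using h
    ext v
    simp only [qBullet, ContinuousLinearMap.comp_apply, ContinuousLinearMap.smul_apply]
    have hab' := congrArg (fun T : V →L[ℂ] V => T v) hab
    simp only [ContinuousLinearMap.mul_apply, ContinuousLinearMap.smul_apply] at hab'
    rw [← ha, ← hb, hab']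
    have hfu'' := congrArg (fun T : V →L[ℂ] W => T (m' v)) hfu'
    simp only [ContinuousLinearMap.comp_apply] at hfu''
    rw [map_smul, map_smul, hfu'']
    have h3 : ∀ (x y : G) (w : W), ((θ x : W →L[ℂ] W)) ((θ y : W →L[ℂ] W) w)
        = ((θ (x * y) : W →L[ℂ] W)) w := by
      intro x y w
      rw [map_mul]; rfl
    rw [map_smul, h3, h3]
    have h4 : σ q₁ * σ q₂ * ((χv : G))⁻¹ = σ (q₁ * q₂) := by
      show σ q₁ * σ q₂ * ((σ (q₁ * q₂))⁻¹ * σ q₁ * σ q₂)⁻¹ = σ (q₁ * q₂)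
      group
    rw [h4]
end
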